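/- Let g₁, g₂ ∈ O₃ satisfy dim_ℝ O₃/⟨t, g₁, g₂⟩ < ∞, and assume the ideal W generated by g₁, g₂ and the three 2×2 minors ∂(g₁,g₂)/∂(t,x₁), ∂(g₁,g₂)/∂(t,x₂), ∂(g₁,g₂)/∂(x₁,x₂) of the Jacobian matrix of (g₁,g₂) is a proper ideal with dim_ℝ O₃/W < ∞ (i.e., V(g₁,g₂) is a curve with an algebraically isolated singularity at the origin). Define g_i'(t,x₁,x₂) = g_i(t², x₁, x₂). Then dim_ℝ O₃/⟨t, g₁', g₂'⟩ < ∞, and the analogous ideal W' generated by g₁', g₂' and the three 2×2 minors of the Jacobian matrix of (g₁',g₂') is proper with dim_ℝ O₃/W' < ∞. -/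

import Mathlib

open Filter Topology

noncomputable section

set_option synthInstance.maxHeartbeats 1000000
set_option maxHeartbeats 1000000

/-- The scalar action of `ℝ` on germs of real functions makes the germ ring an `ℝ`-algebra. -/
instance germAlgebra {α : Type*} (l : Filter α) : Algebra ℝ (Filter.Germ l ℝ) :=
  Algebra.ofModule
    (fun r x y => Filter.Germ.inductionOn₂ x y fun f g => by
      rw [← Filter.Germ.coe_smul, ← Filter.Germ.coe_mul, ← Filter.Germ.coe_mul,
        ← Filter.Germ.coe_smul, smul_mul_assoc])
    (fun r x y => Filter.Germ.inductionOn₂ x y fun f g => by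
      rw [← Filter.Germ.coe_smul, ← Filter.Germ.coe_mul, ← Filter.Germ.coe_mul,
        ← Filter.Germ.coe_smul, mul_smul_comm])

/-- The local ring `O₃` of germs at the origin of real-analytic functions `ℝ³ → ℝ`,
where `ℝ³ = ℝ × ℝ × ℝ` has coordinates `(t, x₁, x₂)`. -/
def O3 : Subalgebra ℝ (Filter.Germ (𝓝 (0 : ℝ × ℝ × ℝ)) ℝ) where
  carrier := {g | ∃ f : ℝ × ℝ × ℝ → ℝ, AnalyticAt ℝ f 0 ∧
    g = (f : Filter.Germ (𝓝 (0 : ℝ × ℝ × ℝ)) ℝ)}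
  mul_mem' := by
    rintro a b ⟨f, hf, rfl⟩ ⟨g, hg, rfl⟩
    exact ⟨f * g, hf.mul hg, (Filter.Germ.coe_mul f g).symm⟩
  add_mem' := by
    rintro a b ⟨f, hf, rfl⟩ ⟨g, hg, rfl⟩
    exact ⟨f + g, hf.add hg, (Filter.Germ.coe_add f g).symm⟩
  algebraMap_mem' := fun r => ⟨fun _ => r, analyticAt_const, by
    rw [Algebra.algebraMap_eq_smul_one, ← Filter.Germ.coe_one, ← Filter.Germ.coe_smul]
    congr 1
    funext x
    simp⟩

/-- The element of `O₃` determined by a function analytic at the origin. -/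
def toO3 (f : ℝ × ℝ × ℝ → ℝ) (hf : AnalyticAt ℝ f 0) : O3 :=
  ⟨(f : Filter.Germ (𝓝 (0 : ℝ × ℝ × ℝ)) ℝ), f, hf, rfl⟩

/-- The germ of the coordinate function `t`. -/
def tO3 : O3 := toO3 (fun p => p.1) analyticAt_fst

/-- Directional (partial) derivative of a function `ℝ³ → ℝ` in the direction `e`. -/
def pd (e : ℝ × ℝ × ℝ) (f : ℝ × ℝ × ℝ → ℝ) : ℝ × ℝ × ℝ → ℝ :=
  fun p => fderiv ℝ f p e

theorem AnalyticAt.pd {f : ℝ × ℝ × ℝ → ℝ} (hf : AnalyticAt ℝ f 0) (e : ℝ × ℝ × ℝ) :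
    AnalyticAt ℝ (pd e f) 0 :=
  ((ContinuousLinearMap.apply ℝ ℝ e).analyticAt (fderiv ℝ f 0)).comp hf.fderiv

/-- The unit vectors in the directions `t`, `x₁`, `x₂`. -/
def et : ℝ × ℝ × ℝ := (1, 0, 0)
def ex1 : ℝ × ℝ × ℝ := (0, 1, 0)
def ex2 : ℝ × ℝ × ℝ := (0, 0, 1)

/-- The Jacobian determinant `∂(u,v)/∂(y,z)` where `y, z` are the directions `e₁, e₂`. -/
def jac (e₁ e₂ : ℝ × ℝ × ℝ) (u v : ℝ × ℝ × ℝ → ℝ) : ℝ × ℝ × ℝ → ℝ :=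
  fun p => pd e₁ u p * pd e₂ v p - pd e₂ u p * pd e₁ v p

theorem AnalyticAt.jac {u v : ℝ × ℝ × ℝ → ℝ} (hu : AnalyticAt ℝ u 0)
    (hv : AnalyticAt ℝ v 0) (e₁ e₂ : ℝ × ℝ × ℝ) : AnalyticAt ℝ (jac e₁ e₂ u v) 0 :=
  ((hu.pd e₁).mul (hv.pd e₂)).sub ((hu.pd e₂).mul (hv.pd e₁))

/-- The map `σ(t, x₁, x₂) = (t², x₁, x₂)`. -/
def sigma3 : ℝ × ℝ × ℝ → ℝ × ℝ × ℝ := fun p => (p.1 ^ 2, p.2)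

theorem sigma3_zero : sigma3 0 = 0 := by simp [sigma3]

theorem sigma3_tendsto : Filter.Tendsto sigma3 (𝓝 (0 : ℝ × ℝ × ℝ)) (𝓝 (0 : ℝ × ℝ × ℝ)) := by
  have hc : Continuous sigma3 := by
    unfold sigma3; fun_prop
  simpa [sigma3_zero] using hc.tendsto (0 : ℝ × ℝ × ℝ)

theorem AnalyticAt.compSigma3 {f : ℝ × ℝ × ℝ → ℝ} (hf : AnalyticAt ℝ f 0) :
    AnalyticAt ℝ (f ∘ sigma3) 0 := by
  have hσ : AnalyticAt ℝ sigma3 0 :=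
    (analyticAt_fst.pow 2).prod analyticAt_snd
  exact AnalyticAt.comp (by rwa [sigma3_zero]) hσ

/-- Substitution `t ↦ t²` on germs at the origin, induced by `σ`. -/
def compSigmaO3 (g : O3) : O3 := by
  refine ⟨(g : Filter.Germ (𝓝 (0 : ℝ × ℝ × ℝ)) ℝ).compTendsto sigma3 sigma3_tendsto, ?_⟩
  obtain ⟨f, hf, hfg⟩ := g.2
  exact ⟨f ∘ sigma3, hf.compSigma3, by rw [hfg]; rfl⟩

-- part 1: eval, units, maximal ideal, Nakayama
section Dev
open Filter Topology

abbrev E3 := ℝ × ℝ × ℝ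

/-- Evaluation at the origin, as a ring hom on germs. -/
def evalG : Filter.Germ (𝓝 (0 : E3)) ℝ →+* ℝ where
  toFun g := Filter.Germ.liftOn g (fun f => f 0) (fun f g h => h.eq_of_nhds)
  map_one' := rfl
  map_mul' x y := Filter.Germ.inductionOn₂ x y fun f g => rfl
  map_zero' := rfl
  map_add' x y := Filter.Germ.inductionOn₂ x y fun f g => rfl

@[simp] lemma evalG_coe (f : E3 → ℝ) : evalG (f : Filter.Germ (𝓝 (0:E3)) ℝ) = f 0 := rfl

@[simp] lemma evalG_smul (r : ℝ) (x : Filter.Germ (𝓝 (0:E3)) ℝ) :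
    evalG (r • x) = r * evalG x := by
  induction x using Filter.Germ.inductionOn with
  | _ f => rw [← Filter.Germ.coe_smul]; rfl

/-- Evaluation at the origin on `O3`. -/
def evalA : O3 →ₐ[ℝ] ℝ where
  toFun g := evalG g.1
  map_one' := rfl
  map_mul' x y := evalG.map_mul x.1 y.1
  map_zero' := rfl
  map_add' x y := evalG.map_add x.1 y.1
  commutes' r := by
    have : (algebraMap ℝ O3 r : O3).1 = r • (1 : Filter.Germ (𝓝 (0:E3)) ℝ) := by
      rw [Algebra.algebraMap_eq_smul_one]; rfl
    show evalG (algebraMap ℝ O3 r : O3).1 = r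
    rw [this, evalG_smul, map_one, mul_one]

@[simp] lemma evalA_toO3 (f : E3 → ℝ) (hf : AnalyticAt ℝ f 0) : evalA (toO3 f hf) = f 0 := rfl

lemma isUnit_of_evalA_ne {g : O3} (h : evalA g ≠ 0) : IsUnit g := by
  obtain ⟨f, hf, hfg⟩ := g.2
  have hg : g = toO3 f hf := Subtype.ext hfg
  have hf0 : f 0 ≠ 0 := by rwa [hg, evalA_toO3] at h
  have hinv : AnalyticAt ℝ (fun p => (f p)⁻¹) 0 := hf.inv hf0
  refine IsUnit.of_mul_eq_one (toO3 _ hinv) ?_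
  rw [hg]
  apply Subtype.ext
  show ((f : Filter.Germ (𝓝 (0:E3)) ℝ) * ((fun p => (f p)⁻¹ : E3 → ℝ) : Filter.Germ (𝓝 (0:E3)) ℝ)) = ((1 : E3 → ℝ) : Filter.Germ (𝓝 (0:E3)) ℝ)
  rw [← Filter.Germ.coe_mul, Filter.Germ.coe_eq]
  have hne : ∀ᶠ p in 𝓝 (0:E3), f p ≠ 0 :=
    hf.continuousAt.eventually_ne hf0
  filter_upwards [hne] with p hp
  simp [mul_inv_cancel₀ hp]

/-- The maximal ideal of `O3`: germs vanishing at the origin. -/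
def mI : Ideal O3 := RingHom.ker (evalA : O3 →ₐ[ℝ] ℝ)

lemma mem_mI {g : O3} : g ∈ mI ↔ evalA g = 0 := Iff.rfl

/-- Nakayama: a finite-codimension ideal contains a power of the maximal ideal. -/
lemma pow_mI_le (I : Ideal O3) (h : FiniteDimensional ℝ (O3 ⧸ I)) :
    ∃ N, 1 ≤ N ∧ mI ^ N ≤ I := by
  have hart : IsArtinianRing (O3 ⧸ I) := by
    have h1 : IsArtinian ℝ (O3 ⧸ I) := inferInstance
    exact isArtinian_of_tower ℝ h1
  obtain ⟨n, hn⟩ := IsArtinianRing.isNilpotent_jacobson_bot (R := O3 ⧸ I)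
  refine ⟨n + 1, le_add_self, ?_⟩
  have hmap : Ideal.map (Ideal.Quotient.mk I) mI ≤ Ideal.jacobson ⊥ := by
    rw [Ideal.map_le_iff_le_comap]
    intro x hx
    rw [Ideal.mem_comap]
    refine (Ideal.mem_jacobson_bot (R := O3 ⧸ I)).mpr ?_
    intro y
    obtain ⟨z, rfl⟩ := Ideal.Quotient.mk_surjective y
    rw [← map_mul, ← map_one (Ideal.Quotient.mk I), ← map_add]
    apply (Ideal.Quotient.mk I).isUnit_map
    apply isUnit_of_evalA_ne
    rw [map_add, map_mul, mem_mI.mp hx, zero_mul, map_one, zero_add]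
    exact one_ne_zero
  intro x hx
  have h1 : Ideal.Quotient.mk I x ∈ Ideal.map (Ideal.Quotient.mk I) (mI ^ (n+1)) :=
    Ideal.mem_map_of_mem _ hx
  rw [Ideal.map_pow (R := O3) (S := O3 ⧸ I)] at h1
  have h2 : (Ideal.map (Ideal.Quotient.mk I) mI) ^ (n+1) ≤ ⊥ := by
    calc (Ideal.map (Ideal.Quotient.mk I) mI) ^ (n+1)
        ≤ (Ideal.jacobson ⊥) ^ (n+1) := Ideal.pow_right_mono hmap _
      _ ≤ (Ideal.jacobson ⊥) ^ n := Ideal.pow_le_pow_right (by omega)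
      _ = ⊥ := by rw [hn]; rfl
  have := h2 h1
  rwa [Ideal.mem_bot, Ideal.Quotient.eq_zero_iff_mem] at this

end Dev

section Dev2
open Filter Topology

/-- Shifted series: fix the first slot of `p (m+1)` at `e`. -/
def shiftSeries (p : FormalMultilinearSeries ℝ E3 ℝ) (e : E3) :
    FormalMultilinearSeries ℝ E3 ℝ :=
  fun m => (p (m + 1)).curryLeft e

lemma shiftSeries_norm (p : FormalMultilinearSeries ℝ E3 ℝ) (e : E3) (m : ℕ) :
    ‖shiftSeries p e m‖ ≤ ‖p (m+1)‖ * ‖e‖ := by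
  calc ‖(p (m + 1)).curryLeft e‖ ≤ ‖(p (m + 1)).curryLeft‖ * ‖e‖ :=
        ContinuousLinearMap.le_opNorm _ e
    _ ≤ ‖p (m+1)‖ * ‖e‖ := by
        gcongr
        refine ContinuousLinearMap.opNorm_le_bound _ (norm_nonneg _) (fun x => ?_)
        refine ContinuousMultilinearMap.opNorm_le_bound (by positivity) (fun w => ?_)
        simpa [← mul_assoc] using ContinuousMultilinearMap.norm_map_cons_le (p (m+1)) x w

lemma hadamard (f : E3 → ℝ) (hf : AnalyticAt ℝ f 0) :
    ∃ (a b c : E3 → ℝ), AnalyticAt ℝ a 0 ∧ AnalyticAt ℝ b 0 ∧ AnalyticAt ℝ c 0 ∧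
      ∀ᶠ v in 𝓝 (0 : E3), f v = f 0 + v.1 * a v + v.2.1 * b v + v.2.2 * c v := by
  obtain ⟨p, r, hp⟩ := hf
  -- pick a positive real radius below r and p.radius
  obtain ⟨r', hr'0, hr'⟩ : ∃ r' : NNReal, 0 < r' ∧ (r' : ENNReal) < r := by
    obtain ⟨s, hs1, hs2⟩ := ENNReal.lt_iff_exists_nnreal_btwn.mp hp.r_pos
    exact ⟨s, by exact_mod_cast ENNReal.coe_pos.mp (by exact_mod_cast hs1), hs2⟩
  have hrrad : (r' : ENNReal) < p.radius := lt_of_lt_of_le hr' hp.r_le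
  obtain ⟨C, hC0, hC⟩ := p.norm_mul_pow_le_of_lt_radius hrrad
  -- the shifted series have radius ≥ r'
  have hrad : ∀ e : E3, (r' : ENNReal) ≤ (shiftSeries p e).radius := by
    intro e
    apply FormalMultilinearSeries.le_radius_of_bound _ (C * ‖e‖ / r')
    intro m
    have h1 : ‖shiftSeries p e m‖ * (r':ℝ) ^ m ≤ ‖p (m+1)‖ * ‖e‖ * (r':ℝ)^m :=
      mul_le_mul_of_nonneg_right (shiftSeries_norm p e m) (by positivity)
    have h2 : ‖p (m+1)‖ * ‖e‖ * (r':ℝ)^m = (‖p (m+1)‖ * (r':ℝ)^(m+1)) * ‖e‖ / r' := by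
      field_simp [ne_of_gt hr'0]
      ring
    calc ‖shiftSeries p e m‖ * (r':ℝ) ^ m ≤ (‖p (m+1)‖ * (r':ℝ)^(m+1)) * ‖e‖ / r' := by
          rw [← h2]; exact h1
      _ ≤ C * ‖e‖ / r' := by
          gcongr
          exact hC (m+1)
  have hpos : ∀ e : E3, 0 < (shiftSeries p e).radius :=
    fun e => lt_of_lt_of_le (by exact_mod_cast hr'0) (hrad e)
  set ga := (shiftSeries p et).sum
  set gb := (shiftSeries p ex1).sum
  set gc := (shiftSeries p ex2).sum
  have hga := (shiftSeries p et).hasFPowerSeriesOnBall (hpos et)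
  have hgb := (shiftSeries p ex1).hasFPowerSeriesOnBall (hpos ex1)
  have hgc := (shiftSeries p ex2).hasFPowerSeriesOnBall (hpos ex2)
  refine ⟨ga, gb, gc, hga.analyticAt, hgb.analyticAt, hgc.analyticAt, ?_⟩
  have hball : EMetric.ball (0:E3) (min (r':ENNReal) r) ∈ 𝓝 (0:E3) :=
    EMetric.ball_mem_nhds _ (lt_min (by exact_mod_cast hr'0) hp.r_pos)
  filter_upwards [hball] with v hv
  have hvr : v ∈ EMetric.ball (0:E3) r := EMetric.ball_subset_ball (min_le_right _ _) hv
  have hvr' : v ∈ EMetric.ball (0:E3) (r' : ENNReal) :=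
    EMetric.ball_subset_ball (min_le_left _ _) hv
  have hvrad : ∀ e : E3, v ∈ EMetric.ball (0:E3) (shiftSeries p e).radius :=
    fun e => EMetric.ball_subset_ball (hrad e) hvr'
  -- sums
  have hsf : HasSum (fun n => p n (fun _ => v)) (f v) := by
    simpa using hp.hasSum hvr
  have hsa : HasSum (fun m => shiftSeries p et m (fun _ => v)) (ga v) :=
    (shiftSeries p et).hasSum (hvrad et)
  have hsb : HasSum (fun m => shiftSeries p ex1 m (fun _ => v)) (gb v) :=
    (shiftSeries p ex1).hasSum (hvrad ex1)
  have hsc : HasSum (fun m => shiftSeries p ex2 m (fun _ => v)) (gc v) :=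
    (shiftSeries p ex2).hasSum (hvrad ex2)
  -- combine: v.1 * a + v.2.1 * b + v.2.2 * c  sums to  Σ_m p (m+1) v^{m+1}
  have hcomb : HasSum (fun m => p (m+1) (fun _ => v))
      (v.1 * ga v + v.2.1 * gb v + v.2.2 * gc v) := by
    have h := ((hsa.mul_left v.1).add (hsb.mul_left v.2.1)).add (hsc.mul_left v.2.2)
    suffices hfun : (fun m => p (m+1) (fun _ => v)) = (fun m => v.1 * shiftSeries p et m (fun _ => v) + v.2.1 * shiftSeries p ex1 m (fun _ => v) + v.2.2 * shiftSeries p ex2 m (fun _ => v)) by rw [hfun]; exact h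
    funext m
    have hv' : v = v.1 • et + v.2.1 • ex1 + v.2.2 • ex2 := by
      simp [et, ex1, ex2, Prod.ext_iff]
    have hcons : (Fin.cons v (fun _ : Fin m => v) : Fin (m+1) → E3) = fun _ => v := by
      funext i
      refine Fin.cases ?_ ?_ i <;> simp
    calc p (m+1) (fun _ => v)
        = (p (m+1)).curryLeft (v.1 • et + v.2.1 • ex1 + v.2.2 • ex2) (fun _ => v) := by
          rw [← hv', ContinuousMultilinearMap.curryLeft_apply, hcons]
      _ = v.1 * shiftSeries p et m (fun _ => v) + v.2.1 * shiftSeries p ex1 m (fun _ => v)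
            + v.2.2 * shiftSeries p ex2 m (fun _ => v) := by
          rw [map_add, map_add, map_smul, map_smul, map_smul]
          simp [shiftSeries]
  -- Σ_n p n v^n = p 0 + Σ_m p(m+1)
  have hsf' : HasSum (fun m => p (m+1) (fun _ => v)) (f v - f 0) := by
    have h0 : p 0 (fun _ => v) = f 0 := hp.coeff_zero _
    have h := (hasSum_nat_add_iff' (g := f v) (f := fun n => p n (fun _ => v)) 1).mpr hsf
    simpa [h0] using h
  have := hcomb.unique hsf'
  linarith [this]

end Dev2

section Dev3
open Filter Topology Pointwise

lemma analyticAt_x1 : AnalyticAt ℝ (fun p : E3 => p.2.1) 0 := by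
  exact analyticAt_fst.comp analyticAt_snd

lemma analyticAt_x2 : AnalyticAt ℝ (fun p : E3 => p.2.2) 0 := by
  exact analyticAt_snd.comp analyticAt_snd

def x1O3 : O3 := toO3 (fun p => p.2.1) analyticAt_x1
def x2O3 : O3 := toO3 (fun p => p.2.2) analyticAt_x2

/-- The ideal generated by the coordinates. -/
def nI : Ideal O3 := Ideal.span {tO3, x1O3, x2O3}

lemma coe_algebraMapO3 (r : ℝ) :
    ((algebraMap ℝ O3 r : O3) : Filter.Germ (𝓝 (0:E3)) ℝ)
      = ((fun _ => r : E3 → ℝ) : Filter.Germ (𝓝 (0:E3)) ℝ) := by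
  rw [Algebra.algebraMap_eq_smul_one]
  have : ((r • (1:O3) : O3) : Filter.Germ (𝓝 (0:E3)) ℝ)
      = r • ((1:O3) : Filter.Germ (𝓝 (0:E3)) ℝ) := rfl
  rw [this]
  show r • ((1 : E3 → ℝ) : Filter.Germ (𝓝 (0:E3)) ℝ) = _
  rw [← Filter.Germ.coe_smul]
  congr 1
  funext x; simp

lemma sub_eval_mem (g : O3) : g - algebraMap ℝ O3 (evalA g) ∈ nI := by
  obtain ⟨f, hf, hfg⟩ := g.2
  have hg : g = toO3 f hf := Subtype.ext hfg
  obtain ⟨a, b, c, ha, hb, hc, hev⟩ := hadamard f hf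
  have key : g - algebraMap ℝ O3 (evalA g)
      = tO3 * toO3 a ha + x1O3 * toO3 b hb + x2O3 * toO3 c hc := by
    rw [hg]
    apply Subtype.ext
    push_cast
    show (f : Filter.Germ (𝓝 (0:E3)) ℝ) - ((algebraMap ℝ O3 (f 0) : O3) : Filter.Germ (𝓝 (0:E3)) ℝ)
        = ((fun p => p.1 : E3 → ℝ) : Filter.Germ (𝓝 (0:E3)) ℝ) * (a : Filter.Germ (𝓝 (0:E3)) ℝ)
          + ((fun p => p.2.1 : E3 → ℝ) : Filter.Germ (𝓝 (0:E3)) ℝ) * (b : Filter.Germ (𝓝 (0:E3)) ℝ)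
          + ((fun p => p.2.2 : E3 → ℝ) : Filter.Germ (𝓝 (0:E3)) ℝ) * (c : Filter.Germ (𝓝 (0:E3)) ℝ)
    rw [coe_algebraMapO3, ← Filter.Germ.coe_sub, ← Filter.Germ.coe_mul, ← Filter.Germ.coe_mul,
      ← Filter.Germ.coe_mul, ← Filter.Germ.coe_add, ← Filter.Germ.coe_add, Filter.Germ.coe_eq]
    filter_upwards [hev] with v hv
    simp only [Pi.sub_apply, Pi.add_apply, Pi.mul_apply]
    rw [hv]; ring
  rw [key]
  have h1 : tO3 ∈ nI := Ideal.subset_span (by simp)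
  have h2 : x1O3 ∈ nI := Ideal.subset_span (by simp)
  have h3 : x2O3 ∈ nI := Ideal.subset_span (by simp)
  exact add_mem (add_mem (Ideal.mul_mem_right _ _ h1) (Ideal.mul_mem_right _ _ h2))
    (Ideal.mul_mem_right _ _ h3)

lemma mI_eq_nI : mI = nI := by
  apply le_antisymm
  · intro g hg
    have := sub_eval_mem g
    rwa [mem_mI.mp hg, map_zero, sub_zero] at this
  · rw [nI, Ideal.span_le]
    rintro x hx
    simp only [Set.mem_insert_iff, Set.mem_singleton_iff] at hx
    rcases hx with rfl | rfl | rfl <;> rfl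

/-- Monomial sets of degree `k`. -/
def Sset : ℕ → Set O3
  | 0 => {1}
  | k + 1 => ({tO3, x1O3, x2O3} : Set O3) * Sset k

lemma Sset_finite : ∀ k, (Sset k).Finite
  | 0 => Set.finite_singleton _
  | k + 1 => Set.Finite.mul (Set.toFinite _) (Sset_finite k)

lemma span_Sset : ∀ k, Ideal.span (Sset k) = nI ^ k
  | 0 => by simp [Sset]
  | k + 1 => by
    rw [Sset, pow_succ', ← span_Sset k, nI, Ideal.span_mul_span']

lemma Sset_mem_pow {k : ℕ} {x : O3} (hx : x ∈ Sset k) : x ∈ nI ^ k := by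
  rw [← span_Sset k]; exact Ideal.subset_span hx

/-- Taylor: finite codimension of any ideal containing a power of `nI`. -/
lemma findim_of_pow_le (I : Ideal O3) (k : ℕ) (h : nI ^ k ≤ I) :
    FiniteDimensional ℝ (O3 ⧸ I) := by
  -- main claim
  have main : ∀ k : ℕ, ∃ s : Set O3, s.Finite ∧
      (⊤ : Submodule ℝ O3) ≤ Submodule.span ℝ s ⊔ (nI ^ k).restrictScalars ℝ := by
    intro k
    induction k with
    | zero => exact ⟨∅, Set.finite_empty, by simp⟩
    | succ k ih =>
      obtain ⟨s, hsfin, hs⟩ := ih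
      refine ⟨s ∪ Sset k, hsfin.union (Sset_finite k), ?_⟩
      set U : Submodule ℝ O3 :=
        Submodule.span ℝ (Sset k) ⊔ (nI ^ (k+1)).restrictScalars ℝ with hU
      have hstep : ((nI ^ k).restrictScalars ℝ : Submodule ℝ O3) ≤ U := by
        intro x hx
        have hx' : x ∈ Ideal.span (Sset k) := by rwa [span_Sset k]
        refine Submodule.span_induction ?_ ?_ ?_ ?_ hx'
        · intro y hy
          exact Submodule.mem_sup_left (Submodule.subset_span hy)
        · exact zero_mem U
        · intro y z _ _ hy hz; exact add_mem hy hz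
        · intro r y _ hyU
          obtain ⟨a, haMem, b, hbMem, rfl⟩ := Submodule.mem_sup.mp hyU
          rw [smul_add]
          refine add_mem ?_ (Submodule.mem_sup_right ?_)
          · -- r • a with a ∈ span ℝ (Sset k)
            refine Submodule.span_induction ?_ ?_ ?_ ?_ haMem
            · intro μ hμ
              have hsplit : r • μ = (r - algebraMap ℝ O3 (evalA r)) * μ
                  + (evalA r) • μ := by
                rw [smul_eq_mul, sub_mul, Algebra.smul_def]; ring
              rw [hsplit]
              refine add_mem (Submodule.mem_sup_right ?_) (Submodule.mem_sup_left ?_)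
              · show (r - algebraMap ℝ O3 (evalA r)) * μ ∈ nI ^ (k+1)
                rw [pow_succ']
                exact Ideal.mul_mem_mul (sub_eval_mem r) (Sset_mem_pow hμ)
              · exact Submodule.smul_mem _ _ (Submodule.subset_span hμ)
            · rw [smul_zero]; exact zero_mem U
            · intro y z _ _ hy hz; rw [smul_add]; exact add_mem hy hz
            · intro c y _ hy
              rw [smul_comm]
              exact Submodule.smul_mem _ _ hy
          · show r • b ∈ nI ^ (k+1)
            exact Ideal.mul_mem_left _ _ hbMem
      calc (⊤ : Submodule ℝ O3) ≤ Submodule.span ℝ s ⊔ (nI ^ k).restrictScalars ℝ := hs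
        _ ≤ Submodule.span ℝ s ⊔ U := sup_le_sup_left hstep _
        _ = Submodule.span ℝ (s ∪ Sset k) ⊔ (nI ^ (k+1)).restrictScalars ℝ := by
            rw [Submodule.span_union, hU, sup_assoc]
  obtain ⟨s, hsfin, hs⟩ := main k
  -- now push to the quotient
  let π := Ideal.Quotient.mkₐ ℝ I
  have hspan : (⊤ : Submodule ℝ (O3 ⧸ I)) ≤ Submodule.span ℝ (π '' s) := by
    intro y _
    obtain ⟨x, rfl⟩ := Ideal.Quotient.mkₐ_surjective ℝ I y
    obtain ⟨a, haMem, b, hbMem, rfl⟩ := Submodule.mem_sup.mp (hs (Submodule.mem_top (x := x)))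
    have hb0 : π b = 0 := by
      have : b ∈ I := h hbMem
      simpa [π, Ideal.Quotient.mkₐ_eq_mk] using (Ideal.Quotient.eq_zero_iff_mem).mpr this
    rw [map_add, hb0, add_zero]
    rw [show (⇑π '' s) = ⇑π.toLinearMap '' s from rfl, Submodule.span_image]
    exact Submodule.mem_map_of_mem haMem
  have : Module.Finite ℝ (O3 ⧸ I) := by
    refine ⟨⟨(hsfin.image π).toFinset, ?_⟩⟩
    rw [Set.Finite.coe_toFinset]
    exact le_antisymm le_top (le_trans hspan (le_of_eq rfl))
  exact this

end Dev3

section Dev4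
open Filter Topology

lemma compSigmaO3_coe (f : E3 → ℝ) (hf : AnalyticAt ℝ f 0) :
    compSigmaO3 (toO3 f hf) = toO3 (f ∘ sigma3) hf.compSigma3 := by
  apply Subtype.ext
  show ((f : Filter.Germ (𝓝 (0:E3)) ℝ).compTendsto sigma3 sigma3_tendsto
      : Filter.Germ (𝓝 (0:E3)) ℝ) = _
  rw [Filter.Germ.coe_compTendsto]
  rfl

/-- Substitution as an `ℝ`-algebra homomorphism. -/
def σalg : O3 →ₐ[ℝ] O3 where
  toFun := compSigmaO3
  map_one' := by
    apply Subtype.ext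
    show ((1:O3) : Filter.Germ (𝓝 (0:E3)) ℝ).compTendsto sigma3 sigma3_tendsto = _
    show ((1 : E3 → ℝ) : Filter.Germ (𝓝 (0:E3)) ℝ).compTendsto sigma3 sigma3_tendsto = _
    rw [Filter.Germ.coe_compTendsto]
    rfl
  map_mul' x y := by
    apply Subtype.ext
    obtain ⟨f, hf, hfx⟩ := x.2
    obtain ⟨g, hg, hgy⟩ := y.2
    show ((x * y : O3) : Filter.Germ (𝓝 (0:E3)) ℝ).compTendsto sigma3 sigma3_tendsto
        = (x : Filter.Germ (𝓝 (0:E3)) ℝ).compTendsto sigma3 sigma3_tendsto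
          * (y : Filter.Germ (𝓝 (0:E3)) ℝ).compTendsto sigma3 sigma3_tendsto
    have hxy : ((x * y : O3) : Filter.Germ (𝓝 (0:E3)) ℝ)
        = ((f * g : E3 → ℝ) : Filter.Germ (𝓝 (0:E3)) ℝ) := by
      push_cast
      rw [hfx, hgy]
    rw [hxy, hfx, hgy, Filter.Germ.coe_compTendsto, Filter.Germ.coe_compTendsto,
      Filter.Germ.coe_compTendsto, ← Filter.Germ.coe_mul]
    rfl
  map_zero' := by
    apply Subtype.ext
    show ((0 : E3 → ℝ) : Filter.Germ (𝓝 (0:E3)) ℝ).compTendsto sigma3 sigma3_tendsto = _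
    rw [Filter.Germ.coe_compTendsto]
    rfl
  map_add' x y := by
    apply Subtype.ext
    obtain ⟨f, hf, hfx⟩ := x.2
    obtain ⟨g, hg, hgy⟩ := y.2
    show ((x + y : O3) : Filter.Germ (𝓝 (0:E3)) ℝ).compTendsto sigma3 sigma3_tendsto
        = (x : Filter.Germ (𝓝 (0:E3)) ℝ).compTendsto sigma3 sigma3_tendsto
          + (y : Filter.Germ (𝓝 (0:E3)) ℝ).compTendsto sigma3 sigma3_tendsto
    have hxy : ((x + y : O3) : Filter.Germ (𝓝 (0:E3)) ℝ)
        = ((f + g : E3 → ℝ) : Filter.Germ (𝓝 (0:E3)) ℝ) := by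
      push_cast
      rw [hfx, hgy]
    rw [hxy, hfx, hgy, Filter.Germ.coe_compTendsto, Filter.Germ.coe_compTendsto,
      Filter.Germ.coe_compTendsto, ← Filter.Germ.coe_add]
    rfl
  commutes' r := by
    apply Subtype.ext
    show ((algebraMap ℝ O3 r : O3) : Filter.Germ (𝓝 (0:E3)) ℝ).compTendsto sigma3 sigma3_tendsto
        = ((algebraMap ℝ O3 r : O3) : Filter.Germ (𝓝 (0:E3)) ℝ)
    rw [coe_algebraMapO3, Filter.Germ.coe_compTendsto]
    rfl

lemma σalg_toO3 (f : E3 → ℝ) (hf : AnalyticAt ℝ f 0) :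
    σalg (toO3 f hf) = toO3 (f ∘ sigma3) hf.compSigma3 := compSigmaO3_coe f hf

lemma σalg_t : σalg tO3 = tO3 * tO3 := by
  rw [tO3, σalg_toO3]
  apply Subtype.ext
  show ((fun p => p.1 : E3 → ℝ) ∘ sigma3 : Filter.Germ (𝓝 (0:E3)) ℝ)
      = ((fun p => p.1 : E3 → ℝ) : Filter.Germ (𝓝 (0:E3)) ℝ)
        * ((fun p => p.1 : E3 → ℝ) : Filter.Germ (𝓝 (0:E3)) ℝ)
  rw [← Filter.Germ.coe_mul, Filter.Germ.coe_eq]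
  filter_upwards with p
  simp [sigma3, Function.comp]
  ring

lemma σalg_x1 : σalg x1O3 = x1O3 := by
  rw [x1O3, σalg_toO3]
  apply Subtype.ext
  show ((fun p => p.2.1 : E3 → ℝ) ∘ sigma3 : Filter.Germ (𝓝 (0:E3)) ℝ)
      = ((fun p => p.2.1 : E3 → ℝ) : Filter.Germ (𝓝 (0:E3)) ℝ)
  rw [Filter.Germ.coe_eq]
  filter_upwards with p
  rfl

lemma σalg_x2 : σalg x2O3 = x2O3 := by
  rw [x2O3, σalg_toO3]
  apply Subtype.ext
  show ((fun p => p.2.2 : E3 → ℝ) ∘ sigma3 : Filter.Germ (𝓝 (0:E3)) ℝ)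
      = ((fun p => p.2.2 : E3 → ℝ) : Filter.Germ (𝓝 (0:E3)) ℝ)
  rw [Filter.Germ.coe_eq]
  filter_upwards with p
  rfl

lemma evalA_σalg (g : O3) : evalA (σalg g) = evalA g := by
  obtain ⟨f, hf, hfg⟩ := g.2
  have hg : g = toO3 f hf := Subtype.ext hfg
  rw [hg, σalg_toO3, evalA_toO3, evalA_toO3]
  show f (sigma3 0) = f 0
  rw [sigma3_zero]

end Dev4

section Dev5
open Filter Topology

def Lσ (p : E3) : E3 →L[ℝ] E3 :=
  ((2 * p.1) • (ContinuousLinearMap.fst ℝ ℝ (ℝ × ℝ))).prod (ContinuousLinearMap.snd ℝ ℝ (ℝ × ℝ))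

lemma hasFDerivAt_sigma3 (p : E3) : HasFDerivAt sigma3 (Lσ p) p := by
  have h1 : HasFDerivAt (fun q : E3 => q.1 ^ 2)
      ((2 * p.1) • (ContinuousLinearMap.fst ℝ ℝ (ℝ × ℝ))) p := by
    have h := (hasFDerivAt_fst (𝕜 := ℝ) (p := p)).mul (hasFDerivAt_fst (𝕜 := ℝ) (p := p))
    have h2 : (fun q : E3 => q.1 ^ 2) = fun q : E3 => q.1 * q.1 := by funext q; ring
    rw [h2]
    rw [show (2 * p.1) • (ContinuousLinearMap.fst ℝ ℝ (ℝ × ℝ)) = p.1 • ContinuousLinearMap.fst ℝ ℝ (ℝ × ℝ) + p.1 • ContinuousLinearMap.fst ℝ ℝ (ℝ × ℝ) by rw [two_mul, add_smul]]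
    exact h
  exact HasFDerivAt.prodMk h1 (hasFDerivAt_snd)

lemma Lσ_apply (p e : E3) : Lσ p e = (2 * p.1 * e.1, e.2) := rfl

lemma pd_comp_eventually (g : E3 → ℝ) (hg : AnalyticAt ℝ g 0) :
    ∀ᶠ p in 𝓝 (0 : E3),
      pd et (g ∘ sigma3) p = 2 * p.1 * pd et g (sigma3 p)
      ∧ pd ex1 (g ∘ sigma3) p = pd ex1 g (sigma3 p)
      ∧ pd ex2 (g ∘ sigma3) p = pd ex2 g (sigma3 p) := by
  have h1 : ∀ᶠ p in 𝓝 (0:E3), AnalyticAt ℝ g (sigma3 p) :=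
    sigma3_tendsto.eventually hg.eventually_analyticAt
  filter_upwards [h1] with p hp
  have hσ := hasFDerivAt_sigma3 p
  have hgd : HasFDerivAt g (fderiv ℝ g (sigma3 p)) (sigma3 p) :=
    hp.differentiableAt.hasFDerivAt
  have hcomp : HasFDerivAt (g ∘ sigma3) ((fderiv ℝ g (sigma3 p)).comp (Lσ p)) p :=
    hgd.comp p hσ
  have hfd : fderiv ℝ (g ∘ sigma3) p = (fderiv ℝ g (sigma3 p)).comp (Lσ p) := hcomp.fderiv
  refine ⟨?_, ?_, ?_⟩
  · show fderiv ℝ (g ∘ sigma3) p et = 2 * p.1 * fderiv ℝ g (sigma3 p) et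
    rw [hfd]
    have : Lσ p et = (2 * p.1) • et := by
      rw [Lσ_apply]; simp [et, Prod.ext_iff]
    rw [ContinuousLinearMap.comp_apply, this, map_smul, smul_eq_mul]
  · show fderiv ℝ (g ∘ sigma3) p ex1 = fderiv ℝ g (sigma3 p) ex1
    rw [hfd]
    have : Lσ p ex1 = ex1 := by rw [Lσ_apply]; simp [ex1, Prod.ext_iff]
    rw [ContinuousLinearMap.comp_apply, this]
  · show fderiv ℝ (g ∘ sigma3) p ex2 = fderiv ℝ g (sigma3 p) ex2
    rw [hfd]
    have : Lσ p ex2 = ex2 := by rw [Lσ_apply]; simp [ex2, Prod.ext_iff]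
    rw [ContinuousLinearMap.comp_apply, this]

lemma jac_comp_t (u v : E3 → ℝ) (hu : AnalyticAt ℝ u 0) (hv : AnalyticAt ℝ v 0)
    {e : E3} (he : e = ex1 ∨ e = ex2) :
    ∀ᶠ p in 𝓝 (0 : E3),
      jac et e (u ∘ sigma3) (v ∘ sigma3) p = 2 * p.1 * jac et e u v (sigma3 p) := by
  filter_upwards [pd_comp_eventually u hu, pd_comp_eventually v hv] with p
    ⟨hu1, hu2, hu3⟩ ⟨hv1, hv2, hv3⟩
  rcases he with rfl | rfl
  · show pd et (u ∘ sigma3) p * pd ex1 (v ∘ sigma3) p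
        - pd ex1 (u ∘ sigma3) p * pd et (v ∘ sigma3) p = _
    rw [hu1, hu2, hv1, hv2]
    show _ = 2 * p.1 * (pd et u (sigma3 p) * pd ex1 v (sigma3 p)
        - pd ex1 u (sigma3 p) * pd et v (sigma3 p))
    ring
  · show pd et (u ∘ sigma3) p * pd ex2 (v ∘ sigma3) p
        - pd ex2 (u ∘ sigma3) p * pd et (v ∘ sigma3) p = _
    rw [hu1, hu3, hv1, hv3]
    show _ = 2 * p.1 * (pd et u (sigma3 p) * pd ex2 v (sigma3 p)
        - pd ex2 u (sigma3 p) * pd et v (sigma3 p))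
    ring

lemma jac_comp_x (u v : E3 → ℝ) (hu : AnalyticAt ℝ u 0) (hv : AnalyticAt ℝ v 0) :
    ∀ᶠ p in 𝓝 (0 : E3),
      jac ex1 ex2 (u ∘ sigma3) (v ∘ sigma3) p = jac ex1 ex2 u v (sigma3 p) := by
  filter_upwards [pd_comp_eventually u hu, pd_comp_eventually v hv] with p
    ⟨hu1, hu2, hu3⟩ ⟨hv1, hv2, hv3⟩
  show pd ex1 (u ∘ sigma3) p * pd ex2 (v ∘ sigma3) p
      - pd ex2 (u ∘ sigma3) p * pd ex1 (v ∘ sigma3) p = _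
  rw [hu2, hu3, hv2, hv3]
  rfl

lemma toO3_jac_t (u v : E3 → ℝ) (hu : AnalyticAt ℝ u 0) (hv : AnalyticAt ℝ v 0)
    {e : E3} (he : e = ex1 ∨ e = ex2) :
    toO3 (jac et e (u ∘ sigma3) (v ∘ sigma3)) (hu.compSigma3.jac hv.compSigma3 et e)
      = algebraMap ℝ O3 2 * tO3 * σalg (toO3 (jac et e u v) (hu.jac hv et e)) := by
  rw [σalg_toO3]
  apply Subtype.ext
  show ((jac et e (u ∘ sigma3) (v ∘ sigma3) : E3 → ℝ) : Filter.Germ (𝓝 (0:E3)) ℝ)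
      = ((algebraMap ℝ O3 2 : O3) : Filter.Germ (𝓝 (0:E3)) ℝ)
        * ((fun p => p.1 : E3 → ℝ) : Filter.Germ (𝓝 (0:E3)) ℝ)
        * ((jac et e u v ∘ sigma3 : E3 → ℝ) : Filter.Germ (𝓝 (0:E3)) ℝ)
  rw [coe_algebraMapO3, ← Filter.Germ.coe_mul, ← Filter.Germ.coe_mul, Filter.Germ.coe_eq]
  filter_upwards [jac_comp_t u v hu hv he] with p hp
  show jac et e (u ∘ sigma3) (v ∘ sigma3) p = 2 * p.1 * (jac et e u v (sigma3 p))
  rw [hp]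

lemma toO3_jac_x (u v : E3 → ℝ) (hu : AnalyticAt ℝ u 0) (hv : AnalyticAt ℝ v 0) :
    toO3 (jac ex1 ex2 (u ∘ sigma3) (v ∘ sigma3)) (hu.compSigma3.jac hv.compSigma3 ex1 ex2)
      = σalg (toO3 (jac ex1 ex2 u v) (hu.jac hv ex1 ex2)) := by
  rw [σalg_toO3]
  apply Subtype.ext
  show ((jac ex1 ex2 (u ∘ sigma3) (v ∘ sigma3) : E3 → ℝ) : Filter.Germ (𝓝 (0:E3)) ℝ)
      = ((jac ex1 ex2 u v ∘ sigma3 : E3 → ℝ) : Filter.Germ (𝓝 (0:E3)) ℝ)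
  rw [Filter.Germ.coe_eq]
  filter_upwards [jac_comp_x u v hu hv] with p hp
  exact hp

end Dev5

section Dev6
open Filter Topology Pointwise

lemma tO3_mem_nI : tO3 ∈ nI := Ideal.subset_span (by simp)
lemma x1O3_mem_nI : x1O3 ∈ nI := Ideal.subset_span (by simp)
lemma x2O3_mem_nI : x2O3 ∈ nI := Ideal.subset_span (by simp)

lemma Sset_decomp : ∀ k, ∀ x ∈ Sset k,
    ∃ (i : ℕ) (y : O3), i ≤ k ∧ y ∈ nI ^ (k - i) ∧ x = tO3 ^ i * σalg y := by
  intro k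
  induction k with
  | zero =>
    intro x hx
    rw [Sset, Set.mem_singleton_iff] at hx
    exact ⟨0, 1, le_refl 0, by simp, by simp [hx]⟩
  | succ k ih =>
    intro x hx
    rw [Sset] at hx
    obtain ⟨a, ha, b, hb, rfl⟩ := hx
    obtain ⟨i, y, hik, hy, rfl⟩ := ih b hb
    simp only [Set.mem_insert_iff, Set.mem_singleton_iff] at ha
    rcases ha with rfl | rfl | rfl
    · exact ⟨i + 1, y, by omega, by
        have : k + 1 - (i + 1) = k - i := by omega
        rw [this]; exact hy, by ring⟩
    · refine ⟨i, x1O3 * y, by omega, ?_, ?_⟩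
      · have harith : k + 1 - i = (k - i) + 1 := by omega
        rw [harith, pow_succ']
        exact Ideal.mul_mem_mul x1O3_mem_nI hy
      · rw [map_mul, σalg_x1]; ring
    · refine ⟨i, x2O3 * y, by omega, ?_, ?_⟩
      · have harith : k + 1 - i = (k - i) + 1 := by omega
        rw [harith, pow_succ']
        exact Ideal.mul_mem_mul x2O3_mem_nI hy
      · rw [map_mul, σalg_x2]; ring

end Dev6


/-- Let `g₁, g₂ ∈ O₃` satisfy `dim_ℝ O₃/⟨t, g₁, g₂⟩ < ∞`, and assume the ideal `W` generated
by `g₁, g₂` and the three 2×2 minors `∂(g₁,g₂)/∂(t,x₁)`, `∂(g₁,g₂)/∂(t,x₂)`,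
`∂(g₁,g₂)/∂(x₁,x₂)` of the Jacobian matrix of `(g₁,g₂)` is proper with
`dim_ℝ O₃/W < ∞` (i.e. `V(g₁,g₂)` is a curve with an algebraically isolated singularity at
the origin). Define `g_i'(t,x₁,x₂) = g_i(t²,x₁,x₂)`. Then `dim_ℝ O₃/⟨t, g₁', g₂'⟩ < ∞`, and
the analogous ideal `W'` for `(g₁',g₂')` is proper with `dim_ℝ O₃/W' < ∞`. -/
theorem curve_aIsolated_after_substitution
    (g₁ g₂ : ℝ × ℝ × ℝ → ℝ) (h₁ : AnalyticAt ℝ g₁ 0) (h₂ : AnalyticAt ℝ g₂ 0)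
    (hfin : FiniteDimensional ℝ
      (O3 ⧸ Ideal.span {tO3, toO3 g₁ h₁, toO3 g₂ h₂}))
    (W : Ideal O3)
    (hWdef : W = Ideal.span {toO3 g₁ h₁, toO3 g₂ h₂,
      toO3 (jac et ex1 g₁ g₂) (h₁.jac h₂ et ex1),
      toO3 (jac et ex2 g₁ g₂) (h₁.jac h₂ et ex2),
      toO3 (jac ex1 ex2 g₁ g₂) (h₁.jac h₂ ex1 ex2)})
    (hWproper : W ≠ ⊤)
    (hWfin : FiniteDimensional ℝ (O3 ⧸ W))
    (W' : Ideal O3)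
    (hW'def : W' = Ideal.span {toO3 (g₁ ∘ sigma3) h₁.compSigma3,
      toO3 (g₂ ∘ sigma3) h₂.compSigma3,
      toO3 (jac et ex1 (g₁ ∘ sigma3) (g₂ ∘ sigma3))
        (h₁.compSigma3.jac h₂.compSigma3 et ex1),
      toO3 (jac et ex2 (g₁ ∘ sigma3) (g₂ ∘ sigma3))
        (h₁.compSigma3.jac h₂.compSigma3 et ex2),
      toO3 (jac ex1 ex2 (g₁ ∘ sigma3) (g₂ ∘ sigma3))
        (h₁.compSigma3.jac h₂.compSigma3 ex1 ex2)}) :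
    FiniteDimensional ℝ
      (O3 ⧸ Ideal.span {tO3, toO3 (g₁ ∘ sigma3) h₁.compSigma3,
        toO3 (g₂ ∘ sigma3) h₂.compSigma3}) ∧
    W' ≠ ⊤ ∧ FiniteDimensional ℝ (O3 ⧸ W') := by
  classical
  set G1 := toO3 g₁ h₁ with hG1
  set G2 := toO3 g₂ h₂ with hG2
  set G1' := toO3 (g₁ ∘ sigma3) h₁.compSigma3 with hG1'
  set G2' := toO3 (g₂ ∘ sigma3) h₂.compSigma3 with hG2'
  set J1 := toO3 (jac et ex1 g₁ g₂) (h₁.jac h₂ et ex1) with hJ1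
  set J2 := toO3 (jac et ex2 g₁ g₂) (h₁.jac h₂ et ex2) with hJ2
  set J3 := toO3 (jac ex1 ex2 g₁ g₂) (h₁.jac h₂ ex1 ex2) with hJ3
  set I₀ : Ideal O3 := Ideal.span {tO3, G1, G2} with hI₀
  set I₀' : Ideal O3 := Ideal.span {tO3, G1', G2'} with hI₀'
  have hσG1 : σalg G1 = G1' := σalg_toO3 g₁ h₁
  have hσG2 : σalg G2 = G2' := σalg_toO3 g₂ h₂
  -- jacobian identities
  have hA1 : toO3 (jac et ex1 (g₁ ∘ sigma3) (g₂ ∘ sigma3))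
      (h₁.compSigma3.jac h₂.compSigma3 et ex1)
      = algebraMap ℝ O3 2 * tO3 * σalg J1 := toO3_jac_t g₁ g₂ h₁ h₂ (Or.inl rfl)
  have hA2 : toO3 (jac et ex2 (g₁ ∘ sigma3) (g₂ ∘ sigma3))
      (h₁.compSigma3.jac h₂.compSigma3 et ex2)
      = algebraMap ℝ O3 2 * tO3 * σalg J2 := toO3_jac_t g₁ g₂ h₁ h₂ (Or.inr rfl)
  have hA3 : toO3 (jac ex1 ex2 (g₁ ∘ sigma3) (g₂ ∘ sigma3))
      (h₁.compSigma3.jac h₂.compSigma3 ex1 ex2)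
      = σalg J3 := toO3_jac_x g₁ g₂ h₁ h₂
  rw [hA1, hA2, hA3] at hW'def
  -- members of W'
  have hG1'W' : G1' ∈ W' := hW'def ▸ Ideal.subset_span (by simp)
  have hG2'W' : G2' ∈ W' := hW'def ▸ Ideal.subset_span (by simp)
  have hA1W' : algebraMap ℝ O3 2 * tO3 * σalg J1 ∈ W' :=
    hW'def ▸ Ideal.subset_span (by simp)
  have hA2W' : algebraMap ℝ O3 2 * tO3 * σalg J2 ∈ W' :=
    hW'def ▸ Ideal.subset_span (by simp)
  have hA3W' : σalg J3 ∈ W' := hW'def ▸ Ideal.subset_span (by simp)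
  have hTJ1 : tO3 * σalg J1 ∈ W' := by
    have h2 : algebraMap ℝ O3 (2⁻¹ : ℝ) * (algebraMap ℝ O3 2 * tO3 * σalg J1)
        = tO3 * σalg J1 := by
      rw [show algebraMap ℝ O3 (2⁻¹:ℝ) * (algebraMap ℝ O3 2 * tO3 * σalg J1)
          = (algebraMap ℝ O3 (2⁻¹:ℝ) * algebraMap ℝ O3 2) * (tO3 * σalg J1) by ring,
        ← map_mul]
      norm_num
    rw [← h2]
    exact Ideal.mul_mem_left _ _ hA1W'
  have hTJ2 : tO3 * σalg J2 ∈ W' := by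
    have h2 : algebraMap ℝ O3 (2⁻¹ : ℝ) * (algebraMap ℝ O3 2 * tO3 * σalg J2)
        = tO3 * σalg J2 := by
      rw [show algebraMap ℝ O3 (2⁻¹:ℝ) * (algebraMap ℝ O3 2 * tO3 * σalg J2)
          = (algebraMap ℝ O3 (2⁻¹:ℝ) * algebraMap ℝ O3 2) * (tO3 * σalg J2) by ring,
        ← map_mul]
      norm_num
    rw [← h2]
    exact Ideal.mul_mem_left _ _ hA2W'
  -- Nakayama
  obtain ⟨P, hP1, hP⟩ := pow_mI_le I₀ hfin
  obtain ⟨N, hN1, hN⟩ := pow_mI_le W hWfin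
  rw [mI_eq_nI] at hP hN
  -- W ≤ mI (all generators vanish at 0)
  have hWgen_mem : ∀ x ∈ ({G1, G2, J1, J2, J3} : Set O3), evalA x = 0 := by
    intro x hx
    by_contra hne
    exact hWproper (Ideal.eq_top_of_isUnit_mem W (hWdef ▸ Ideal.subset_span hx)
      (isUnit_of_evalA_ne hne))
  -- map of W under σalg
  set Wσ : Ideal O3 := Ideal.map σalg W with hWσ
  have hWσ_span : Wσ = Ideal.span {σalg G1, σalg G2, σalg J1, σalg J2, σalg J3} := by
    rw [hWσ, hWdef, Ideal.map_span]
    congr 1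
    simp [Set.image_insert_eq]
  -- (F1) tO3 * Wσ ≤ W'
  have hF1 : ∀ w ∈ Wσ, tO3 * w ∈ W' := by
    have hspan : Ideal.span {tO3} * Wσ ≤ W' := by
      rw [hWσ_span, Ideal.span_mul_span', Ideal.span_le]
      rintro z hz
      rw [Set.mem_mul] at hz
      obtain ⟨a, ha, b, hb, rfl⟩ := hz
      rw [Set.mem_singleton_iff] at ha
      subst ha
      simp only [Set.mem_insert_iff, Set.mem_singleton_iff] at hb
      rcases hb with rfl | rfl | rfl | rfl | rfl
      · rw [hσG1]; exact Ideal.mul_mem_left _ _ hG1'W'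
      · rw [hσG2]; exact Ideal.mul_mem_left _ _ hG2'W'
      · exact hTJ1
      · exact hTJ2
      · exact Ideal.mul_mem_left _ _ hA3W'
    intro w hw
    exact hspan (Ideal.mul_mem_mul (Ideal.mem_span_singleton_self tO3) hw)
  -- (F2) σ(I₀ * W) ≤ W'
  have hF2 : Ideal.map σalg (I₀ * W) ≤ W' := by
    rw [Ideal.map_mul]
    have hmapI₀ : Ideal.map σalg I₀ = Ideal.span {σalg tO3, σalg G1, σalg G2} := by
      rw [hI₀, Ideal.map_span]
      congr 1
      simp [Set.image_insert_eq]
    rw [hmapI₀, ← hWσ, hWσ_span, Ideal.span_mul_span', Ideal.span_le]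
    rintro z hz
    rw [Set.mem_mul] at hz
    obtain ⟨a, ha, b, hb, rfl⟩ := hz
    have hbWσ : b ∈ Wσ := by
      rw [hWσ_span]
      exact Ideal.subset_span hb
    simp only [Set.mem_insert_iff, Set.mem_singleton_iff] at ha
    rcases ha with rfl | rfl | rfl
    · rw [σalg_t, mul_assoc]
      exact Ideal.mul_mem_left _ _ (hF1 b hbWσ)
    · rw [hσG1]; exact Ideal.mul_mem_right _ _ hG1'W'
    · rw [hσG2]; exact Ideal.mul_mem_right _ _ hG2'W'
  -- (F3) T^(2N+1) ∈ W'
  have hF3 : tO3 ^ (2 * N + 1) ∈ W' := by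
    have hTN : tO3 ^ N ∈ W := hN (Ideal.pow_mem_pow tO3_mem_nI N)
    have hσTN : tO3 ^ (2 * N) ∈ Wσ := by
      have := Ideal.mem_map_of_mem (f := σalg) hTN
      rw [map_pow, σalg_t] at this
      have heq : (tO3 * tO3) ^ N = tO3 ^ (2 * N) := by
        rw [← sq, ← pow_mul]
      rwa [heq] at this
    have : tO3 ^ (2 * N + 1) = tO3 * tO3 ^ (2 * N) := by ring
    rw [this]
    exact hF1 _ hσTN
  -- goal 1
  have goal1 : FiniteDimensional ℝ (O3 ⧸ I₀') := by
    apply findim_of_pow_le I₀' (2 * P)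
    rw [← span_Sset, Ideal.span_le]
    intro x hx
    obtain ⟨i, y, hik, hy, rfl⟩ := Sset_decomp (2 * P) x hx
    have hTmem : tO3 ∈ I₀' := Ideal.subset_span (by simp)
    rcases Nat.eq_zero_or_pos i with rfl | hipos
    · simp only [pow_zero, one_mul]
      have hyP : y ∈ nI ^ P :=
        Ideal.pow_le_pow_right (show P ≤ 2 * P by omega) (by simpa using hy)
      have hyI₀ : y ∈ I₀ := hP hyP
      have : σalg y ∈ Ideal.map σalg I₀ := Ideal.mem_map_of_mem _ hyI₀
      have hmaple : Ideal.map σalg I₀ ≤ I₀' := by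
        rw [hI₀, Ideal.map_span, Ideal.span_le]
        rintro z hz
        simp only [Set.image_insert_eq, Set.image_singleton, Set.mem_insert_iff,
          Set.mem_singleton_iff] at hz
        rcases hz with rfl | rfl | rfl
        · rw [σalg_t]; exact Ideal.mul_mem_right _ _ hTmem
        · rw [hσG1]; exact Ideal.subset_span (by simp)
        · rw [hσG2]; exact Ideal.subset_span (by simp)
      exact hmaple this
    · obtain ⟨j, rfl⟩ : ∃ j, i = j + 1 := ⟨i - 1, by omega⟩
      have : tO3 ^ (j + 1) * σalg y = tO3 ^ j * σalg y * tO3 := by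
        rw [pow_succ]; ring
      rw [this]
      exact Ideal.mul_mem_left _ _ hTmem
  -- goal 2
  have hW'sub : W' ≤ mI := by
    rw [hW'def, Ideal.span_le]
    rintro x hx
    simp only [Set.mem_insert_iff, Set.mem_singleton_iff] at hx
    have hevT : evalA tO3 = 0 := rfl
    rcases hx with rfl | rfl | rfl | rfl | rfl
    · show evalA G1' = 0
      rw [← hσG1, evalA_σalg]
      exact hWgen_mem G1 (by simp)
    · show evalA G2' = 0
      rw [← hσG2, evalA_σalg]
      exact hWgen_mem G2 (by simp)
    · show evalA (algebraMap ℝ O3 2 * tO3 * σalg J1) = 0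
      rw [map_mul, map_mul, hevT, mul_zero, zero_mul]
    · show evalA (algebraMap ℝ O3 2 * tO3 * σalg J2) = 0
      rw [map_mul, map_mul, hevT, mul_zero, zero_mul]
    · show evalA (σalg J3) = 0
      rw [evalA_σalg]
      exact hWgen_mem J3 (by simp)
  have goal2 : W' ≠ ⊤ := by
    intro htop
    have h1 : (1 : O3) ∈ W' := htop ▸ Submodule.mem_top
    have := hW'sub h1
    rw [mem_mI, map_one] at this
    exact one_ne_zero this
  -- goal 3
  have goal3 : FiniteDimensional ℝ (O3 ⧸ W') := by
    apply findim_of_pow_le W' (3 * N + P + 1)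
    rw [← span_Sset, Ideal.span_le]
    intro x hx
    obtain ⟨i, y, hik, hy, rfl⟩ := Sset_decomp (3 * N + P + 1) x hx
    rcases Nat.eq_zero_or_pos i with rfl | hipos
    · simp only [pow_zero, one_mul]
      have hyNP : y ∈ nI ^ (N + P) :=
        Ideal.pow_le_pow_right (show N + P ≤ 3 * N + P + 1 by omega) (by simpa using hy)
      have hmem : y ∈ I₀ * W := by
        have : nI ^ (N + P) = nI ^ P * nI ^ N := by rw [← pow_add, Nat.add_comm]
        rw [this] at hyNP
        exact Ideal.mul_mono hP hN hyNP
      exact hF2 (Ideal.mem_map_of_mem _ hmem)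
    · by_cases hle : i ≤ 2 * N + P + 1
      · -- 1 ≤ i, and M - i ≥ N  ⇒  y ∈ W, use F1
        have hyN : y ∈ nI ^ N :=
          Ideal.pow_le_pow_right (show N ≤ 3 * N + P + 1 - i by omega) hy
        have hyW : y ∈ W := hN hyN
        have hσyWσ : σalg y ∈ Wσ := Ideal.mem_map_of_mem _ hyW
        obtain ⟨j, rfl⟩ : ∃ j, i = j + 1 := ⟨i - 1, by omega⟩
        have : tO3 ^ (j + 1) * σalg y = tO3 ^ j * (tO3 * σalg y) := by
          rw [pow_succ]; ring
        rw [this]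
        exact Ideal.mul_mem_left _ _ (hF1 _ hσyWσ)
      · -- i large: T^(2N+1) ∈ W'
        obtain ⟨j, rfl⟩ : ∃ j, i = j + (2 * N + 1) := ⟨i - (2 * N + 1), by omega⟩
        have : tO3 ^ (j + (2 * N + 1)) * σalg y
            = tO3 ^ j * σalg y * tO3 ^ (2 * N + 1) := by
          rw [pow_add]; ring
        rw [this]
        exact Ideal.mul_mem_left _ _ hF3
  exact ⟨goal1, goal2, goal3⟩

end
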